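/- For all integers m, n, r ≥ 0 and every integer k, in ℤ[q]: c_q^{(m+r)}(n,k) = Σ_{i=0}^{n} q^{r(n-i)} · [m]_q^{⟨n-i⟩} · qbinom(n,i) · c_q^{(r)}(i,k). -/

import Mathlib

open Finset Polynomial

/-- The q-integer [n]_q = 1 + q + ⋯ + q^{n-1} in ℤ[q]. -/
noncomputable def qint (n : ℕ) : Polynomial ℤ := ∑ i ∈ range n, X ^ i

/-- The q-rising factorial [n]_q^{⟨m⟩} = ∏_{i=n}^{n+m-1} [i]_q. -/
noncomputable def qrise (n m : ℕ) : Polynomial ℤ := ∏ i ∈ range m, qint (n + i)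

/-- The q-binomial coefficient. -/
noncomputable def qbinom : ℕ → ℕ → Polynomial ℤ
  | _, 0 => 1
  | 0, _ + 1 => 0
  | n + 1, k + 1 => qbinom n k + X ^ (k + 1) * qbinom n (k + 1)

/-- The q-Stirling numbers of the first kind (natural-number index version). -/
noncomputable def qStirling1Nat : ℕ → ℕ → Polynomial ℤ
  | 0, 0 => 1
  | 0, _ + 1 => 0
  | _ + 1, 0 => 0
  | n + 1, k + 1 => qStirling1Nat n k + qint n * qStirling1Nat n (k + 1)

/-- The q-Stirling numbers of the first kind, vanishing for negative second index. -/
noncomputable def qStirling1 (n : ℕ) (k : ℤ) : Polynomial ℤ :=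
  if 0 ≤ k then qStirling1Nat n k.toNat else 0

/-- The q-r-Stirling numbers of the first kind. -/
noncomputable def qrStirling1 (r n : ℕ) (k : ℤ) : Polynomial ℤ :=
  ∑ i ∈ range (n + 1), qrise r (n - i) * qbinom n i * qStirling1 i k

/-! Both sides satisfy the recurrence `X(n+1, k) = X(n, k-1) + [n+m+r]_q X(n, k)` with the same
values at `n = 0`. Each side is a q-binomial convolution `∑ᵢ w(n-i) ⟦n,i⟧_q P(i,k)` of a sequence `P`
with recurrence `P(i+1, k) = P(i, k-1) + bᵢ P(i, k)`, and by q-Pascal such a convolution satisfies the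
recurrence with constant coefficient `c` as soon as `bᵢ wⱼ + qⁱ wⱼ₊₁ = c wⱼ` whenever `i + j = n`.
For `w = [r]_q^⟨·⟩`, `b = [·]_q` this is `[i]_q + qⁱ [r+j]_q = [n+r]_q`; for `wⱼ = q^{rj} [m]_q^⟨j⟩`,
`bᵢ = [i+r]_q` it is `[i+r]_q + q^{i+r} [m+j]_q = [n+m+r]_q`. -/

lemma qint_add (a b : ℕ) : qint (a + b) = qint a + X ^ a * qint b := by
  simp [qint, sum_range_add, pow_add, mul_sum]

lemma qrise_succ (n m : ℕ) : qrise n (m + 1) = qrise n m * qint (n + m) :=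
  prod_range_succ _ _

lemma qbinom_zero_right (n : ℕ) : qbinom n 0 = 1 := by cases n <;> rfl

lemma qbinom_succ_succ (n k : ℕ) :
    qbinom (n + 1) (k + 1) = qbinom n k + X ^ (k + 1) * qbinom n (k + 1) := rfl

lemma qbinom_eq_zero_of_lt {n k : ℕ} (h : n < k) : qbinom n k = 0 := by
  induction n generalizing k with
  | zero => obtain ⟨k, rfl⟩ := Nat.exists_eq_add_one_of_ne_zero (by omega : k ≠ 0); rfl
  | succ n ih =>
    obtain ⟨k, rfl⟩ := Nat.exists_eq_add_one_of_ne_zero (by omega : k ≠ 0)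
    rw [qbinom_succ_succ, ih (by omega), ih (by omega), mul_zero, add_zero]

lemma sum_qbinom_succ_mul (n : ℕ) (g : ℕ → Polynomial ℤ) :
    ∑ i ∈ range (n + 2), qbinom (n + 1) i * g i =
      ∑ i ∈ range (n + 1), qbinom n i * (g (i + 1) + X ^ i * g i) := by
  have shifted : ∑ i ∈ range (n + 1), X ^ (i + 1) * qbinom n (i + 1) * g (i + 1) + g 0 =
      ∑ i ∈ range (n + 1), X ^ i * qbinom n i * g i := by
    have := sum_range_succ' (fun i => X ^ i * qbinom n i * g i) (n + 1)
    rw [sum_range_succ, qbinom_eq_zero_of_lt (Nat.lt_succ_self n)] at this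
    simpa [qbinom_zero_right] using this.symm
  rw [sum_range_succ', qbinom_zero_right]
  simp only [qbinom_succ_succ, add_mul, sum_add_distrib, mul_add, one_mul, add_assoc, shifted]
  congr 1
  refine sum_congr rfl fun i _ => ?_
  ring

lemma qStirling1_succ (n : ℕ) (k : ℤ) :
    qStirling1 (n + 1) k = qStirling1 n (k - 1) + qint n * qStirling1 n k := by
  rcases lt_trichotomy k 0 with hneg | rfl | hpos
  · simp [qStirling1, hneg.not_ge, show ¬ 1 ≤ k by omega]
  · cases n <;> simp [qStirling1, qStirling1Nat, qint]
  · obtain ⟨j, rfl⟩ : ∃ j : ℕ, k = j + 1 := ⟨(k - 1).toNat, by omega⟩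
    simp [qStirling1, qStirling1Nat, hpos.le]

noncomputable def qbinomConv (w : ℕ → Polynomial ℤ) (P : ℕ → ℤ → Polynomial ℤ) (n : ℕ) (k : ℤ) :
    Polynomial ℤ :=
  ∑ i ∈ range (n + 1), w (n - i) * qbinom n i * P i k

lemma qbinomConv_succ {w b : ℕ → Polynomial ℤ} {P : ℕ → ℤ → Polynomial ℤ} {c : Polynomial ℤ}
    {n : ℕ} (hP : ∀ i k, P (i + 1) k = P i (k - 1) + b i * P i k)
    (hw : ∀ i j, i + j = n → b i * w j + X ^ i * w (j + 1) = c * w j) (k : ℤ) :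
    qbinomConv w P (n + 1) k = qbinomConv w P n (k - 1) + c * qbinomConv w P n k := by
  calc qbinomConv w P (n + 1) k
      = ∑ i ∈ range (n + 2), qbinom (n + 1) i * (w (n + 1 - i) * P i k) :=
        sum_congr rfl fun i _ => by ring
    _ = ∑ i ∈ range (n + 1),
          qbinom n i * (w (n - i) * P (i + 1) k + X ^ i * (w (n - i + 1) * P i k)) := by
        rw [sum_qbinom_succ_mul]
        refine sum_congr rfl fun i hi => ?_
        rw [show n + 1 - (i + 1) = n - i by omega, show n + 1 - i = n - i + 1 by grind]
    _ = qbinomConv w P n (k - 1) + c * qbinomConv w P n k := by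
        simp only [qbinomConv, mul_sum, ← sum_add_distrib]
        refine sum_congr rfl fun i hi => ?_
        rw [hP]
        linear_combination qbinom n i * P i k * hw i (n - i) (by grind)

lemma qrStirling1_eq_qbinomConv (r : ℕ) : qrStirling1 r = qbinomConv (qrise r) qStirling1 := rfl

lemma qrStirling1_succ (r n : ℕ) (k : ℤ) :
    qrStirling1 r (n + 1) k = qrStirling1 r n (k - 1) + qint (n + r) * qrStirling1 r n k := by
  rw [qrStirling1_eq_qbinomConv]
  refine qbinomConv_succ qStirling1_succ (fun i j hij => ?_) k
  rw [qrise_succ, ← hij, show i + j + r = i + (r + j) by ring, qint_add i]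
  ring

lemma qbinomConv_shift_succ (m r n : ℕ) (k : ℤ) :
    qbinomConv (fun j => X ^ (r * j) * qrise m j) (qrStirling1 r) (n + 1) k =
      qbinomConv (fun j => X ^ (r * j) * qrise m j) (qrStirling1 r) n (k - 1) +
        qint (n + (m + r)) * qbinomConv (fun j => X ^ (r * j) * qrise m j) (qrStirling1 r) n k := by
  refine qbinomConv_succ (qrStirling1_succ r) (fun i j hij => ?_) k
  rw [qrise_succ, ← hij, show i + j + (m + r) = (i + r) + (m + j) by ring, qint_add (i + r)]
  ring

theorem qrStirling1_shift (m n r : ℕ) (k : ℤ) :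
    qrStirling1 (m + r) n k =
      ∑ i ∈ range (n + 1), X ^ (r * (n - i)) * qrise m (n - i) * qbinom n i *
        qrStirling1 r i k := by
  change qrStirling1 (m + r) n k = qbinomConv (fun j => X ^ (r * j) * qrise m j) (qrStirling1 r) n k
  induction n generalizing k with
  | zero => simp [qbinomConv, qrStirling1, qrise, qbinom_zero_right]
  | succ n ih => rw [qrStirling1_succ, qbinomConv_shift_succ, ih, ih]
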